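/- (Gauss–Newton one-step progress.) Suppose μ := σ_min(Σ₀) > 0, K is a stabilizing gain, K* is a stabilizing gain minimizing C, and 0 < η ≤ 1. Let K′ := K − η (R + B^⊤P_KB)^{−1} E_K. Then K′ is stabilizing and C(K′) − C(K*) ≤ (1 − η μ / ‖Σ_{K*}‖) · (C(K) − C(K*)). -/

import Mathlib

open Matrix

noncomputable section

/-- Spectral radius of a real square matrix: the supremum of the absolute values of its
complex eigenvalues. -/
def specRad {d : ℕ} (M : Matrix (Fin d) (Fin d) ℝ) : ℝ :=
  ⨆ μ : spectrum ℂ (M.map (algebraMap ℝ ℂ)), ‖(μ : ℂ)‖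

/-- Minimum singular value of a real matrix. -/
def sigmaMin {m n : ℕ} (M : Matrix (Fin m) (Fin n) ℝ) : ℝ :=
  Real.sqrt (⨅ i, (show (Mᵀ * M).IsHermitian by
    simpa [Matrix.conjTranspose_eq_transpose_of_trivial] using
      Matrix.isHermitian_conjTranspose_mul_self M).eigenvalues i)

/-- Spectral norm (maximum singular value) of a real matrix. -/
def specNorm {m n : ℕ} (M : Matrix (Fin m) (Fin n) ℝ) : ℝ :=
  Real.sqrt (⨆ i, (show (Mᵀ * M).IsHermitian by
    simpa [Matrix.conjTranspose_eq_transpose_of_trivial] using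
      Matrix.isHermitian_conjTranspose_mul_self M).eigenvalues i)

/-- Frobenius norm of a real matrix. -/
def frobNorm {m n : ℕ} (M : Matrix (Fin m) (Fin n) ℝ) : ℝ :=
  Real.sqrt (∑ i, ∑ j, (M i j) ^ 2)

/-- For a stabilizing gain `K`, the unique positive semidefinite solution `P_K` of
`P = Q + Kᵀ R K + (A - B K)ᵀ P (A - B K)`, given by its convergent series representation. -/
def Pmat {d k : ℕ} (A : Matrix (Fin d) (Fin d) ℝ) (B : Matrix (Fin d) (Fin k) ℝ)
    (Q : Matrix (Fin d) (Fin d) ℝ) (R : Matrix (Fin k) (Fin k) ℝ)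
    (K : Matrix (Fin k) (Fin d) ℝ) : Matrix (Fin d) (Fin d) ℝ :=
  ∑' t : ℕ, ((A - B * K)ᵀ) ^ t * (Q + Kᵀ * R * K) * (A - B * K) ^ t

/-- The state correlation matrix `Σ_K = ∑_{t} (A-BK)^t Σ₀ ((A-BK)ᵀ)^t`. -/
def SigmaMat {d k : ℕ} (A : Matrix (Fin d) (Fin d) ℝ) (B : Matrix (Fin d) (Fin k) ℝ)
    (Sig0 : Matrix (Fin d) (Fin d) ℝ) (K : Matrix (Fin k) (Fin d) ℝ) :
    Matrix (Fin d) (Fin d) ℝ :=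
  ∑' t : ℕ, (A - B * K) ^ t * Sig0 * ((A - B * K)ᵀ) ^ t

/-- The LQR cost `C(K) = Tr(Σ₀ P_K)`. -/
def Cost {d k : ℕ} (A : Matrix (Fin d) (Fin d) ℝ) (B : Matrix (Fin d) (Fin k) ℝ)
    (Q : Matrix (Fin d) (Fin d) ℝ) (R : Matrix (Fin k) (Fin k) ℝ)
    (Sig0 : Matrix (Fin d) (Fin d) ℝ) (K : Matrix (Fin k) (Fin d) ℝ) : ℝ :=
  (Sig0 * Pmat A B Q R K).trace

/-- `E_K = (R + Bᵀ P_K B) K - Bᵀ P_K A`. -/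
def Emat {d k : ℕ} (A : Matrix (Fin d) (Fin d) ℝ) (B : Matrix (Fin d) (Fin k) ℝ)
    (Q : Matrix (Fin d) (Fin d) ℝ) (R : Matrix (Fin k) (Fin k) ℝ)
    (K : Matrix (Fin k) (Fin d) ℝ) : Matrix (Fin k) (Fin d) ℝ :=
  (R + Bᵀ * Pmat A B Q R K * B) * K - Bᵀ * Pmat A B Q R K * A

namespace LQR

attribute [local instance] Matrix.linftyOpNormedAddCommGroup Matrix.linftyOpNormedRing
  Matrix.linftyOpNormedAlgebra

variable {d : ℕ}

lemma norm_map_complex (M : Matrix (Fin d) (Fin d) ℝ) :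
    ‖M.map (algebraMap ℝ ℂ)‖ = ‖M‖ := by
  rw [Matrix.linfty_opNorm_def, Matrix.linfty_opNorm_def]
  congr 1
  refine Finset.sup_congr rfl fun i _ => ?_
  refine Finset.sum_congr rfl fun j _ => ?_
  simp [Matrix.map_apply, Complex.nnnorm_real]

lemma entry_le_norm (A : Matrix (Fin d) (Fin d) ℝ) (i j : Fin d) :
    ‖A i j‖ ≤ ‖A‖ := by
  rw [Matrix.linfty_opNorm_def]
  have h1 : ‖A i j‖₊ ≤ ∑ j', ‖A i j'‖₊ := Finset.single_le_sum (f := fun j' => ‖A i j'‖₊)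
    (fun _ _ => zero_le) (Finset.mem_univ j)
  have h2 : (∑ j', ‖A i j'‖₊) ≤ Finset.univ.sup fun i => ∑ j', ‖A i j'‖₊ :=
    Finset.le_sup (f := fun i => ∑ j', ‖A i j'‖₊) (Finset.mem_univ i)
  exact_mod_cast h1.trans h2

lemma norm_transpose_le (A : Matrix (Fin d) (Fin d) ℝ) : ‖Aᵀ‖ ≤ d * ‖A‖ := by
  rw [Matrix.linfty_opNorm_def (A := Aᵀ)]
  have : ∀ i ∈ Finset.univ, (∑ j, ‖Aᵀ i j‖₊) ≤ ‖A‖.toNNReal * d := by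
    intro i _
    calc (∑ j, ‖Aᵀ i j‖₊) ≤ ∑ _j : Fin d, ‖A‖.toNNReal := by
          refine Finset.sum_le_sum fun j _ => ?_
          have := entry_le_norm A j i
          rw [Matrix.transpose_apply]
          have h2 : (‖A j i‖₊ : ℝ) ≤ (‖A‖.toNNReal : ℝ) := by
            rw [Real.coe_toNNReal _ (norm_nonneg A)]; exact this
          exact_mod_cast h2
      _ = ‖A‖.toNNReal * d := by simp [mul_comm]
  have h := Finset.sup_le this
  calc ((Finset.univ.sup fun i => ∑ j, ‖Aᵀ i j‖₊ : NNReal) : ℝ) ≤ ((‖A‖.toNNReal * d : NNReal) : ℝ) := by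
        exact_mod_cast h
    _ = d * ‖A‖ := by
        push_cast
        rw [Real.coe_toNNReal _ (norm_nonneg A)]; ring

/-- Geometric decay of powers from spectral radius `< 1`. -/
lemma specRad_decay {M : Matrix (Fin d) (Fin d) ℝ} (h : specRad M < 1) :
    ∃ c r : ℝ, 0 < c ∧ 0 < r ∧ r < 1 ∧
      ∀ t, ‖M ^ t‖ ≤ c * r ^ t ∧ ‖Mᵀ ^ t‖ ≤ c * r ^ t := by
  haveI : CompleteSpace (Matrix (Fin d) (Fin d) ℂ) := FiniteDimensional.complete ℂ _
  set Mc := M.map (algebraMap ℝ ℂ) with hMc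
  set ρ : ℝ := max (specRad M) 0 with hρ
  have hρ0 : 0 ≤ ρ := le_max_right _ _
  have hρ1 : ρ < 1 := max_lt h one_pos
  set r : ℝ := (ρ + 1) / 2 with hr
  have hr0 : 0 < r := by positivity
  have hr1 : r < 1 := by rw [hr]; linarith
  have hρr : ρ < r := by rw [hr]; linarith
  have hspec : spectralRadius ℂ Mc ≤ ENNReal.ofReal ρ := by
    rw [spectralRadius]
    refine iSup₂_le fun k hk => ?_
    have hb : BddAbove (Set.range fun μ : spectrum ℂ Mc => ‖(μ : ℂ)‖) :=
      Set.Finite.bddAbove (Set.finite_range _)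
    have hk1 : ‖k‖ ≤ specRad M := le_ciSup hb (⟨k, hk⟩ : spectrum ℂ Mc)
    rw [← enorm_eq_nnnorm, ← ofReal_norm]
    exact ENNReal.ofReal_le_ofReal (le_trans hk1
      (le_max_left _ _))
  have hlt : spectralRadius ℂ Mc < ENNReal.ofReal r :=
    lt_of_le_of_lt hspec ((ENNReal.ofReal_lt_ofReal_iff hr0).mpr hρr)
  have hev : ∀ᶠ n : ℕ in Filter.atTop,
      (‖Mc ^ n‖₊ : ENNReal) ^ (1 / (n : ℝ)) < ENNReal.ofReal r :=
    (spectrum.pow_nnnorm_pow_one_div_tendsto_nhds_spectralRadius Mc).eventually_lt_const hlt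
  obtain ⟨N, hN⟩ := Filter.eventually_atTop.mp hev
  have hnorm_eq : ∀ n : ℕ, ‖M ^ n‖ = ‖Mc ^ n‖ := by
    intro n
    have : Mc ^ n = (M ^ n).map (algebraMap ℝ ℂ) := by
      have h1 : Mc = (algebraMap ℝ ℂ).mapMatrix M := rfl
      rw [h1, ← map_pow, RingHom.mapMatrix_apply]
    rw [this, norm_map_complex]
  have key : ∀ n : ℕ, max N 1 ≤ n → ‖M ^ n‖ ≤ r ^ n := by
    intro n hn
    have hn1 : 1 ≤ n := le_trans (le_max_right _ _) hn
    have hnN : N ≤ n := le_trans (le_max_left _ _) hn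
    have h1 := hN n hnN
    have hne : (1 / (n : ℝ)) ≠ 0 := by
      simp only [ne_eq, one_div, inv_eq_zero, Nat.cast_eq_zero]
      omega
    have h2 : (‖Mc ^ n‖₊ : ENNReal) ≤ (ENNReal.ofReal r) ^ (n : ℝ) := by
      have h3 := ENNReal.rpow_le_rpow (le_of_lt h1) (by positivity : (0:ℝ) ≤ (n:ℝ))
      rw [← ENNReal.rpow_mul] at h3
      have heq : 1 / (n : ℝ) * n = 1 := by
        field_simp
      rwa [heq, ENNReal.rpow_one] at h3
    have h4 : (ENNReal.ofReal r) ^ (n : ℝ) = ENNReal.ofReal (r ^ n) := by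
      rw [ENNReal.rpow_natCast, ← ENNReal.ofReal_pow (le_of_lt hr0)]
    rw [h4, ← enorm_eq_nnnorm, ← ofReal_norm] at h2
    rw [hnorm_eq]
    exact (ENNReal.ofReal_le_ofReal_iff (by positivity)).mp h2
  set T : ℕ := max N 1 with hT
  set c₀ : ℝ := 1 + ∑ n ∈ Finset.range T, ‖M ^ n‖ / r ^ n with hc₀
  have hc₀1 : 1 ≤ c₀ := by
    rw [hc₀]
    have : 0 ≤ ∑ n ∈ Finset.range T, ‖M ^ n‖ / r ^ n :=
      Finset.sum_nonneg fun n _ => by positivity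
    linarith
  have hc₀0 : 0 < c₀ := lt_of_lt_of_le one_pos hc₀1
  have hbase : ∀ t, ‖M ^ t‖ ≤ c₀ * r ^ t := by
    intro t
    rcases le_or_gt T t with ht | ht
    · calc ‖M ^ t‖ ≤ r ^ t := key t ht
        _ ≤ c₀ * r ^ t := by nlinarith [pow_pos hr0 t]
    · have h5 : ‖M ^ t‖ / r ^ t ≤ ∑ n ∈ Finset.range T, ‖M ^ n‖ / r ^ n :=
        Finset.single_le_sum (f := fun n => ‖M ^ n‖ / r ^ n)
          (fun n _ => by positivity) (Finset.mem_range.mpr ht)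
      have h6 : ‖M ^ t‖ / r ^ t ≤ c₀ := by rw [hc₀]; linarith
      have h7 : 0 < r ^ t := pow_pos hr0 t
      calc ‖M ^ t‖ = (‖M ^ t‖ / r ^ t) * r ^ t := by field_simp
        _ ≤ c₀ * r ^ t := by nlinarith
  refine ⟨(d + 1) * c₀, r, by positivity, hr0, hr1, fun t => ⟨?_, ?_⟩⟩
  · calc ‖M ^ t‖ ≤ c₀ * r ^ t := hbase t
      _ ≤ (d + 1) * c₀ * r ^ t := by
        have h7 : 0 < r ^ t := pow_pos hr0 t
        have hd : (0:ℝ) ≤ d := Nat.cast_nonneg d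
        nlinarith [mul_nonneg (mul_nonneg hd hc₀0.le) h7.le]
  · calc ‖Mᵀ ^ t‖ = ‖(M ^ t)ᵀ‖ := by rw [Matrix.transpose_pow]
      _ ≤ d * ‖M ^ t‖ := norm_transpose_le _
      _ ≤ d * (c₀ * r ^ t) := by
        have := hbase t
        have hd : (0:ℝ) ≤ d := by positivity
        nlinarith
      _ ≤ (d + 1) * c₀ * r ^ t := by
        have h7 : 0 < r ^ t := pow_pos hr0 t
        have hd : (0:ℝ) ≤ d := Nat.cast_nonneg d
        nlinarith [mul_nonneg hc₀0.le h7.le]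


local instance : CompleteSpace (Matrix (Fin d) (Fin d) ℝ) := FiniteDimensional.complete ℝ _

/-- The observability-type Gramian `∑ (Mᵀ)^t S M^t`. -/
def lyap (M S : Matrix (Fin d) (Fin d) ℝ) : Matrix (Fin d) (Fin d) ℝ :=
  ∑' t : ℕ, Mᵀ ^ t * S * M ^ t

lemma summable_lyap {M : Matrix (Fin d) (Fin d) ℝ} (h : specRad M < 1)
    (S : Matrix (Fin d) (Fin d) ℝ) : Summable (fun t : ℕ => Mᵀ ^ t * S * M ^ t) := by
  obtain ⟨c, r, hc, hr0, hr1, hb⟩ := specRad_decay h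
  refine Summable.of_norm_bounded (g := fun t => (c * c * ‖S‖) * (r * r) ^ t) ?_ ?_
  · exact ((summable_geometric_of_lt_one (by positivity) (by nlinarith)).mul_left _)
  · intro t
    calc ‖Mᵀ ^ t * S * M ^ t‖ ≤ ‖Mᵀ ^ t * S‖ * ‖M ^ t‖ := norm_mul_le _ _
      _ ≤ ‖Mᵀ ^ t‖ * ‖S‖ * ‖M ^ t‖ := by
          have := norm_mul_le (Mᵀ ^ t) S
          have h2 : (0:ℝ) ≤ ‖M ^ t‖ := norm_nonneg _
          nlinarith
      _ ≤ (c * r ^ t) * ‖S‖ * (c * r ^ t) := by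
          have h1 := (hb t).1
          have h2 := (hb t).2
          have h3 : (0:ℝ) ≤ ‖S‖ := norm_nonneg _
          have h5 : (0:ℝ) ≤ ‖M ^ t‖ := norm_nonneg _
          have h6 : (0:ℝ) ≤ c * r ^ t := by positivity
          exact mul_le_mul (mul_le_mul h2 le_rfl h3 h6) h1 h5 (by positivity)
      _ = (c * c * ‖S‖) * (r * r) ^ t := by rw [mul_pow]; ring

/-- Transpose commutes with `tsum`. -/
lemma transpose_tsum {f : ℕ → Matrix (Fin d) (Fin d) ℝ} (hf : Summable f) :
    (∑' t, f t)ᵀ = ∑' t, (f t)ᵀ := by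
  let L : Matrix (Fin d) (Fin d) ℝ →L[ℝ] Matrix (Fin d) (Fin d) ℝ :=
    LinearMap.toContinuousLinearMap
      (Matrix.transposeLinearEquiv (Fin d) (Fin d) ℝ ℝ).toLinearMap
  exact L.map_tsum hf

/-- Trace commutes with `tsum`. -/
lemma trace_tsum {f : ℕ → Matrix (Fin d) (Fin d) ℝ} (hf : Summable f) :
    (∑' t, f t).trace = ∑' t, (f t).trace := by
  let L : Matrix (Fin d) (Fin d) ℝ →L[ℝ] ℝ :=
    LinearMap.toContinuousLinearMap (Matrix.traceLinearMap (Fin d) ℝ ℝ)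
  exact L.map_tsum hf

/-- Quadratic form commutes with `tsum`. -/
lemma dotProduct_mulVec_tsum {f : ℕ → Matrix (Fin d) (Fin d) ℝ} (hf : Summable f)
    (x : Fin d → ℝ) :
    x ⬝ᵥ (∑' t, f t).mulVec x = ∑' t, x ⬝ᵥ (f t).mulVec x := by
  let L0 : Matrix (Fin d) (Fin d) ℝ →ₗ[ℝ] ℝ :=
    { toFun := fun A => x ⬝ᵥ A.mulVec x
      map_add' := fun A B => by simp [Matrix.add_mulVec, dotProduct_add]
      map_smul' := fun c A => by simp [Matrix.smul_mulVec, dotProduct_smul] }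
  let L : Matrix (Fin d) (Fin d) ℝ →L[ℝ] ℝ := LinearMap.toContinuousLinearMap L0
  exact L.map_tsum hf

lemma lyap_fixed {M : Matrix (Fin d) (Fin d) ℝ} (h : specRad M < 1)
    (S : Matrix (Fin d) (Fin d) ℝ) :
    lyap M S = S + Mᵀ * lyap M S * M := by
  have hs := summable_lyap h S
  have h0 : lyap M S = S + ∑' t : ℕ, Mᵀ ^ (t + 1) * S * M ^ (t + 1) := by
    rw [lyap, hs.tsum_eq_zero_add]
    simp
  have h1 : ∀ t : ℕ, Mᵀ ^ (t + 1) * S * M ^ (t + 1) = Mᵀ * (Mᵀ ^ t * S * M ^ t) * M := by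
    intro t
    rw [pow_succ' Mᵀ t, pow_succ M t]
    simp only [mul_assoc]
  have h2 : ∑' t : ℕ, Mᵀ ^ (t + 1) * S * M ^ (t + 1) = Mᵀ * lyap M S * M := by
    rw [tsum_congr h1]
    have h3 : Summable fun t : ℕ => Mᵀ * (Mᵀ ^ t * S * M ^ t) := hs.mul_left Mᵀ
    calc ∑' t : ℕ, Mᵀ * (Mᵀ ^ t * S * M ^ t) * M
        = (∑' t : ℕ, Mᵀ * (Mᵀ ^ t * S * M ^ t)) * M := h3.tsum_mul_right M
      _ = Mᵀ * lyap M S * M := by rw [hs.tsum_mul_left Mᵀ, lyap]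
  conv_lhs => rw [h0]
  rw [h2]

lemma lyap_unique {M P S : Matrix (Fin d) (Fin d) ℝ} (h : specRad M < 1)
    (hP : P = S + Mᵀ * P * M) : P = lyap M S := by
  have hs := summable_lyap h S
  have key : ∀ T : ℕ, P = (∑ t ∈ Finset.range T, Mᵀ ^ t * S * M ^ t) + Mᵀ ^ T * P * M ^ T := by
    intro T
    induction T with
    | zero => simp
    | succ T ih =>
      rw [Finset.sum_range_succ]
      have hstep : Mᵀ ^ T * P * M ^ T
          = Mᵀ ^ T * S * M ^ T + Mᵀ ^ (T + 1) * P * M ^ (T + 1) := by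
        conv_lhs => rw [hP]
        rw [pow_succ Mᵀ T, pow_succ' M T]
        simp only [mul_add, add_mul, mul_assoc]
      conv_lhs => rw [ih, hstep]
      rw [add_assoc]

  -- remainder tends to zero
  obtain ⟨c, r, hc, hr0, hr1, hb⟩ := specRad_decay h
  have hrem : Filter.Tendsto (fun T : ℕ => Mᵀ ^ T * P * M ^ T) Filter.atTop (nhds 0) := by
    refine tendsto_zero_iff_norm_tendsto_zero.mpr ?_
    have hub : ∀ T, ‖Mᵀ ^ T * P * M ^ T‖ ≤ (c * c * ‖P‖) * (r * r) ^ T := by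
      intro t
      calc ‖Mᵀ ^ t * P * M ^ t‖ ≤ ‖Mᵀ ^ t * P‖ * ‖M ^ t‖ := norm_mul_le _ _
        _ ≤ ‖Mᵀ ^ t‖ * ‖P‖ * ‖M ^ t‖ := by
            have := norm_mul_le (Mᵀ ^ t) P
            have h2 : (0:ℝ) ≤ ‖M ^ t‖ := norm_nonneg _
            nlinarith
        _ ≤ (c * r ^ t) * ‖P‖ * (c * r ^ t) := by
            have h1 := (hb t).1
            have h2 := (hb t).2
            have h3 : (0:ℝ) ≤ ‖P‖ := norm_nonneg _
            have h5 : (0:ℝ) ≤ ‖M ^ t‖ := norm_nonneg _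
            have h6 : (0:ℝ) ≤ c * r ^ t := by positivity
            exact mul_le_mul (mul_le_mul h2 le_rfl h3 h6) h1 h5 (by positivity)
        _ = (c * c * ‖P‖) * (r * r) ^ t := by rw [mul_pow]; ring
    have hgeo : Filter.Tendsto (fun T : ℕ => (c * c * ‖P‖) * (r * r) ^ T)
        Filter.atTop (nhds 0) := by
      rw [show (0:ℝ) = (c * c * ‖P‖) * 0 by ring]
      exact (tendsto_pow_atTop_nhds_zero_of_lt_one (by positivity) (by nlinarith)).const_mul _
    exact squeeze_zero (fun T => norm_nonneg _) hub hgeo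
  have hpart : Filter.Tendsto (fun T : ℕ => ∑ t ∈ Finset.range T, Mᵀ ^ t * S * M ^ t)
      Filter.atTop (nhds (lyap M S)) := hs.hasSum.tendsto_sum_nat
  have hsum : Filter.Tendsto
      (fun T : ℕ => (∑ t ∈ Finset.range T, Mᵀ ^ t * S * M ^ t) + Mᵀ ^ T * P * M ^ T)
      Filter.atTop (nhds (lyap M S + 0)) := hpart.add hrem
  rw [add_zero] at hsum
  have hconst : Filter.Tendsto (fun _ : ℕ => P) Filter.atTop (nhds P) := tendsto_const_nhds
  have : (fun _ : ℕ => P) = fun T : ℕ =>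
      (∑ t ∈ Finset.range T, Mᵀ ^ t * S * M ^ t) + Mᵀ ^ T * P * M ^ T := by
    funext T; exact key T
  rw [this] at hconst
  exact tendsto_nhds_unique hconst hsum

lemma lyap_posSemidef {M S : Matrix (Fin d) (Fin d) ℝ} (h : specRad M < 1)
    (hS : S.PosSemidef) : (lyap M S).PosSemidef := by
  have hs := summable_lyap h S
  have hterm : ∀ t : ℕ, (Mᵀ ^ t * S * M ^ t).PosSemidef := by
    intro t
    have h2 := hS.conjTranspose_mul_mul_same (M ^ t)
    rwa [conjTranspose_eq_transpose_of_trivial, Matrix.transpose_pow] at h2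
  refine Matrix.PosSemidef.of_dotProduct_mulVec_nonneg ?_ ?_
  · show (lyap M S)ᴴ = lyap M S
    rw [conjTranspose_eq_transpose_of_trivial, lyap, transpose_tsum hs]
    refine tsum_congr fun t => ?_
    have h2 := (hterm t).1.eq
    rwa [conjTranspose_eq_transpose_of_trivial] at h2
  · intro x
    show (0:ℝ) ≤ star x ⬝ᵥ (lyap M S).mulVec x
    have hsx : star x = x := by simp
    rw [hsx, lyap, dotProduct_mulVec_tsum hs]
    refine tsum_nonneg fun t => ?_
    have := (hterm t).dotProduct_mulVec_nonneg x
    rwa [hsx] at this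


lemma psd_eq_conjTranspose_mul_self {X : Matrix (Fin d) (Fin d) ℝ} (hX : X.PosSemidef) :
    ∃ B : Matrix (Fin d) (Fin d) ℝ, X = Bᴴ * B := by
  refine ⟨Matrix.diagonal (fun i => Real.sqrt (hX.1.eigenvalues i)) *
    star (hX.1.eigenvectorUnitary : Matrix (Fin d) (Fin d) ℝ), ?_⟩
  conv_lhs => rw [hX.1.spectral_theorem, Unitary.conjStarAlgAut_apply]
  have hsq : Matrix.diagonal (RCLike.ofReal ∘ hX.1.eigenvalues)
      = Matrix.diagonal (fun i => Real.sqrt (hX.1.eigenvalues i)) *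
        Matrix.diagonal (fun i => Real.sqrt (hX.1.eigenvalues i)) := by
    rw [Matrix.diagonal_mul_diagonal]; congr 1; funext i
    simp [Real.mul_self_sqrt (hX.eigenvalues_nonneg i)]
  rw [hsq, Matrix.conjTranspose_mul, Matrix.diagonal_conjTranspose]
  simp only [Matrix.star_eq_conjTranspose, Matrix.conjTranspose_conjTranspose, star_trivial,
    Matrix.mul_assoc]

section Complexify

open scoped ComplexOrder

lemma map_transpose_complex (X : Matrix (Fin d) (Fin d) ℝ) :
    Xᵀ.map (algebraMap ℝ ℂ) = (X.map (algebraMap ℝ ℂ))ᴴ := by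
  ext i j
  simp [Matrix.conjTranspose_apply, Matrix.map_apply, Matrix.transpose_apply,
    Complex.conj_ofReal]

lemma posSemidef_map_complex {X : Matrix (Fin d) (Fin d) ℝ} (hX : X.PosSemidef) :
    (X.map (algebraMap ℝ ℂ)).PosSemidef := by
  obtain ⟨B, rfl⟩ := psd_eq_conjTranspose_mul_self hX
  rw [Matrix.map_mul, Matrix.conjTranspose_eq_transpose_of_trivial, map_transpose_complex]
  exact Matrix.posSemidef_conjTranspose_mul_self _

lemma posDef_map_complex {X : Matrix (Fin d) (Fin d) ℝ} (hX : X.PosDef) :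
    (X.map (algebraMap ℝ ℂ)).PosDef := by
  have hpsd := posSemidef_map_complex hX.posSemidef
  have hdet : (X.map (algebraMap ℝ ℂ)).det ≠ 0 := by
    have h := (RingHom.map_det (algebraMap ℝ ℂ) X).symm
    rw [RingHom.mapMatrix_apply] at h
    rw [h]
    have h2 := hX.det_pos
    simp only [Complex.coe_algebraMap, ne_eq, Complex.ofReal_eq_zero]
    exact ne_of_gt h2
  refine Matrix.PosDef.of_dotProduct_mulVec_pos hpsd.1 fun v hv => ?_
  rcases eq_or_lt_of_le (hpsd.dotProduct_mulVec_nonneg v) with heq | hlt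
  · exfalso
    have h0 : (X.map (algebraMap ℝ ℂ)) *ᵥ v = 0 :=
      (hpsd.dotProduct_mulVec_zero_iff v).mp heq.symm
    have := (Matrix.exists_mulVec_eq_zero_iff.mp ⟨v, hv, h0⟩)
    exact hdet this
  · exact hlt

lemma spectrum_transpose (A : Matrix (Fin d) (Fin d) ℂ) :
    spectrum ℂ Aᵀ = spectrum ℂ A := by
  ext z
  rw [spectrum.mem_iff, spectrum.mem_iff]
  have h1 : (algebraMap ℂ (Matrix (Fin d) (Fin d) ℂ)) z - Aᵀ
      = ((algebraMap ℂ (Matrix (Fin d) (Fin d) ℂ)) z - A)ᵀ := by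
    rw [Matrix.transpose_sub]
    congr 1
    simp [Matrix.transpose_smul, Matrix.transpose_one, Algebra.algebraMap_eq_smul_one]
  rw [h1]
  rw [Matrix.isUnit_iff_isUnit_det, Matrix.isUnit_iff_isUnit_det, Matrix.det_transpose]

lemma specRad_transpose (M : Matrix (Fin d) (Fin d) ℝ) : specRad Mᵀ = specRad M := by
  unfold specRad
  have h1 : spectrum ℂ (Mᵀ.map (algebraMap ℝ ℂ)) = spectrum ℂ (M.map (algebraMap ℝ ℂ)) := by
    rw [map_transpose_complex]
    have h2 : (M.map (algebraMap ℝ ℂ))ᴴ = ((M.map (algebraMap ℝ ℂ))ᵀ) := by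
      rw [← map_transpose_complex, Matrix.transpose_map]
    rw [h2, spectrum_transpose]
  rw [h1]

/-- Lyapunov criterion: if `P ≻ 0`, `Q₀ ≻ 0` and `P - MᵀPM ⪰ Q₀`, then `ρ(M) < 1`. -/
lemma specRad_lt_one_of_lyapunov {M P Q0 : Matrix (Fin d) (Fin d) ℝ}
    (hP : P.PosDef) (hQ : Q0.PosDef) (hle : (P - Mᵀ * P * M - Q0).PosSemidef) :
    specRad M < 1 := by
  set Mc := M.map (algebraMap ℝ ℂ) with hMcdef
  have habs : ∀ z ∈ spectrum ℂ Mc, ‖z‖ < 1 := by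
    intro z hz
    -- get an eigenvector
    have hdet : ((algebraMap ℂ (Matrix (Fin d) (Fin d) ℂ)) z - Mc).det = 0 := by
      by_contra hd
      exact (spectrum.mem_iff.mp hz) ((Matrix.isUnit_iff_isUnit_det _).mpr (Ne.isUnit hd))
    obtain ⟨v, hv, hveq⟩ := Matrix.exists_mulVec_eq_zero_iff.mpr hdet
    have heig : Mc *ᵥ v = z • v := by
      have h2 : ((algebraMap ℂ (Matrix (Fin d) (Fin d) ℂ)) z) *ᵥ v - Mc *ᵥ v = 0 := by
        rw [← Matrix.sub_mulVec]; exact hveq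
      have h3 : ((algebraMap ℂ (Matrix (Fin d) (Fin d) ℂ)) z) *ᵥ v = z • v := by
        rw [Algebra.algebraMap_eq_smul_one, Matrix.smul_mulVec, Matrix.one_mulVec]
      rw [h3] at h2
      exact (sub_eq_zero.mp h2).symm
    set Pc := P.map (algebraMap ℝ ℂ) with hPc
    set Qc := Q0.map (algebraMap ℝ ℂ) with hQc
    have hPcd : Pc.PosDef := posDef_map_complex hP
    have hQcd : Qc.PosDef := posDef_map_complex hQ
    have hlec : ((P - Mᵀ * P * M - Q0).map (algebraMap ℝ ℂ)).PosSemidef :=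
      posSemidef_map_complex hle
    have hmapeq : (P - Mᵀ * P * M - Q0).map (algebraMap ℝ ℂ)
        = Pc - Mcᴴ * Pc * Mc - Qc := by
      have hsub : ∀ X Y : Matrix (Fin d) (Fin d) ℝ,
          (X - Y).map (algebraMap ℝ ℂ) = X.map (algebraMap ℝ ℂ) - Y.map (algebraMap ℝ ℂ) :=
        fun X Y => Matrix.map_sub _ (fun a b => by simp) _ _
      rw [hsub, hsub, Matrix.map_mul, Matrix.map_mul, map_transpose_complex]
  -- quadratic forms
    have hq := hlec.dotProduct_mulVec_nonneg v
    rw [hmapeq] at hq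
    have ha := hPcd.dotProduct_mulVec_pos hv
    have hb := hQcd.dotProduct_mulVec_pos hv
    set a : ℂ := star v ⬝ᵥ Pc *ᵥ v with hadef
    set b : ℂ := star v ⬝ᵥ Qc *ᵥ v with hbdef
    have hm : star v ⬝ᵥ (Mcᴴ * Pc * Mc) *ᵥ v = (Complex.normSq z : ℂ) * a := by
      have h4 : (Mcᴴ * Pc * Mc) *ᵥ v = Mcᴴ *ᵥ (Pc *ᵥ (Mc *ᵥ v)) := by
        rw [← Matrix.mulVec_mulVec, ← Matrix.mulVec_mulVec]
      rw [h4, Matrix.dotProduct_mulVec, ← Matrix.star_mulVec, heig]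
      rw [star_smul, Matrix.mulVec_smul, smul_dotProduct, dotProduct_smul, smul_smul,
        smul_eq_mul, Complex.star_def, ← Complex.normSq_eq_conj_mul_self]
    have hq2 : 0 ≤ star v ⬝ᵥ (Pc - Mcᴴ * Pc * Mc - Qc) *ᵥ v := hq
    rw [Matrix.sub_mulVec, Matrix.sub_mulVec, dotProduct_sub, dotProduct_sub, hm] at hq2
    -- pass to real parts
    rw [Complex.lt_def] at ha hb
    rw [Complex.le_def] at hq2
    obtain ⟨ha1, ha2⟩ := ha
    obtain ⟨hb1, hb2⟩ := hb
    obtain ⟨hq3, _⟩ := hq2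
    simp only [Complex.zero_re, Complex.zero_im, Complex.sub_re] at ha1 hb1 ha2 hb2 hq3
    have hmre : ((Complex.normSq z : ℂ) * a).re = Complex.normSq z * a.re := by
      rw [Complex.mul_re]
      simp
    rw [hmre] at hq3
    have harea : (star v ⬝ᵥ Pc *ᵥ v).re = a.re := rfl
    have hbrea : (star v ⬝ᵥ Qc *ᵥ v).re = b.re := rfl
    rw [harea, hbrea] at hq3
    have h5 : Complex.normSq z < 1 := by nlinarith
    have h6 : ‖z‖ ^ 2 = Complex.normSq z := Complex.sq_norm z
    by_contra hcon
    push_neg at hcon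
    nlinarith [norm_nonneg z]
  -- conclude sup < 1
  unfold specRad
  rcases isEmpty_or_nonempty (spectrum ℂ (M.map (algebraMap ℝ ℂ))) with he | hne
  · rw [Real.iSup_of_isEmpty]
    exact one_pos
  · obtain ⟨μ0, hμ0⟩ := Finite.exists_max
      (fun μ : spectrum ℂ (M.map (algebraMap ℝ ℂ)) => ‖(μ : ℂ)‖)
    exact lt_of_le_of_lt (ciSup_le hμ0) (habs _ μ0.2)

end Complexify


section Eigen

/-- A real symmetric matrix dominates `c • 1` if all its eigenvalues are `≥ c`. -/
lemma sub_smul_one_posSemidef {S : Matrix (Fin d) (Fin d) ℝ} (hS : S.IsHermitian) {c : ℝ}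
    (h : ∀ i, c ≤ hS.eigenvalues i) : (S - c • 1).PosSemidef := by
  have hU2 : (hS.eigenvectorUnitary : Matrix (Fin d) (Fin d) ℝ) *
      star (hS.eigenvectorUnitary : Matrix (Fin d) (Fin d) ℝ) = 1 :=
    (Matrix.mem_unitaryGroup_iff).mp hS.eigenvectorUnitary.2
  set U := (hS.eigenvectorUnitary : Matrix (Fin d) (Fin d) ℝ) with hUdef
  have hd : Matrix.diagonal (fun i => hS.eigenvalues i - c)
      = Matrix.diagonal (RCLike.ofReal ∘ hS.eigenvalues) - c • 1 := by
    rw [Matrix.smul_one_eq_diagonal, ← Matrix.diagonal_sub]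
    congr 1
  have key : S - c • 1 = U * (Matrix.diagonal (fun i => hS.eigenvalues i - c)) * star U := by
    conv_lhs => rw [hS.spectral_theorem, Unitary.conjStarAlgAut_apply]
    rw [hd, Matrix.mul_sub, Matrix.sub_mul]
    congr 1
    rw [mul_smul_comm, mul_one, smul_mul_assoc, hU2]
  rw [key]
  have hdiag : (Matrix.diagonal (fun i => hS.eigenvalues i - c)).PosSemidef :=
    Matrix.posSemidef_diagonal_iff.mpr (fun i => sub_nonneg.mpr (h i))
  have := hdiag.mul_mul_conjTranspose_same U
  rwa [← Matrix.star_eq_conjTranspose] at this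

/-- A real symmetric matrix is dominated by `c • 1` if all its eigenvalues are `≤ c`. -/
lemma smul_one_sub_posSemidef {S : Matrix (Fin d) (Fin d) ℝ} (hS : S.IsHermitian) {c : ℝ}
    (h : ∀ i, hS.eigenvalues i ≤ c) : (c • 1 - S).PosSemidef := by
  have hU2 : (hS.eigenvectorUnitary : Matrix (Fin d) (Fin d) ℝ) *
      star (hS.eigenvectorUnitary : Matrix (Fin d) (Fin d) ℝ) = 1 :=
    (Matrix.mem_unitaryGroup_iff).mp hS.eigenvectorUnitary.2
  set U := (hS.eigenvectorUnitary : Matrix (Fin d) (Fin d) ℝ) with hUdef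
  have hd : Matrix.diagonal (fun i => c - hS.eigenvalues i)
      = c • 1 - Matrix.diagonal (RCLike.ofReal ∘ hS.eigenvalues) := by
    rw [Matrix.smul_one_eq_diagonal, ← Matrix.diagonal_sub]
    congr 1
  have key : c • 1 - S = U * (Matrix.diagonal (fun i => c - hS.eigenvalues i)) * star U := by
    conv_lhs => rw [hS.spectral_theorem, Unitary.conjStarAlgAut_apply]
    rw [hd, Matrix.mul_sub, Matrix.sub_mul]
    congr 1
    rw [mul_smul_comm, mul_one, smul_mul_assoc, hU2]
  rw [key]
  have hdiag : (Matrix.diagonal (fun i => c - hS.eigenvalues i)).PosSemidef :=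
    Matrix.posSemidef_diagonal_iff.mpr (fun i => sub_nonneg.mpr (h i))
  have := hdiag.mul_mul_conjTranspose_same U
  rwa [← Matrix.star_eq_conjTranspose] at this

lemma dotProduct_self_pos {v : Fin d → ℝ} (hv : v ≠ 0) : 0 < v ⬝ᵥ v := by
  rcases lt_or_eq_of_le (Finset.sum_nonneg fun j _ => mul_self_nonneg (v j)) with h | h
  · exact h
  · exact absurd (dotProduct_self_eq_zero.mp h.symm) hv

lemma quad_transpose_mul_self (Sig : Matrix (Fin d) (Fin d) ℝ) (v : Fin d → ℝ) :
    v ⬝ᵥ (Sigᵀ * Sig) *ᵥ v = (Sig *ᵥ v) ⬝ᵥ (Sig *ᵥ v) := by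
  rw [← Matrix.mulVec_mulVec, Matrix.dotProduct_mulVec, Matrix.vecMul_transpose]

/-- Eigenvalue bounds for a PSD matrix in terms of `sigmaMin` and `specNorm`. -/
lemma posSemidef_sub_sigmaMin_smul {Sig : Matrix (Fin d) (Fin d) ℝ} (hS : Sig.PosSemidef) :
    (Sig - sigmaMin Sig • 1).PosSemidef := by
  have hT : (Sigᵀ * Sig).IsHermitian := by
    simpa [Matrix.conjTranspose_eq_transpose_of_trivial] using
      Matrix.isHermitian_conjTranspose_mul_self Sig
  set m : ℝ := ⨅ i, hT.eigenvalues i with hmdef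
  have hμ : sigmaMin Sig = Real.sqrt m := rfl
  have hm : ∀ i, m ≤ hT.eigenvalues i := fun i => ciInf_le (Set.finite_range _).bddBelow i
  have hTm := sub_smul_one_posSemidef hT hm
  have heig : ∀ i, sigmaMin Sig ≤ hS.1.eigenvalues i := by
    intro i
    set v : Fin d → ℝ := ⇑(hS.1.eigenvectorBasis i) with hvdef
    have hv0 : v ≠ 0 := by
      intro hcon
      exact (hS.1.eigenvectorBasis.orthonormal.ne_zero i) (by rw [hvdef] at hcon; simpa using hcon)
    have hvv : 0 < v ⬝ᵥ v := dotProduct_self_pos hv0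
    have heigv : Sig *ᵥ v = hS.1.eigenvalues i • v := hS.1.mulVec_eigenvectorBasis i
    set lam := hS.1.eigenvalues i with hlamdef
    have hq := hTm.dotProduct_mulVec_nonneg v
    have hsv : star v = v := by simp
    rw [hsv, Matrix.sub_mulVec, dotProduct_sub, quad_transpose_mul_self, heigv] at hq
    rw [Matrix.smul_mulVec, Matrix.one_mulVec, dotProduct_smul, smul_dotProduct] at hq
    have hq2 : 0 ≤ lam * (lam * (v ⬝ᵥ v)) - m * (v ⬝ᵥ v) := by
      simpa [smul_eq_mul] using hq
    have hmle : m ≤ lam ^ 2 := by nlinarith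
    have hlam0 : 0 ≤ lam := hS.eigenvalues_nonneg i
    calc sigmaMin Sig = Real.sqrt m := hμ
      _ ≤ Real.sqrt (lam ^ 2) := Real.sqrt_le_sqrt hmle
      _ = lam := by rw [Real.sqrt_sq hlam0]
  exact sub_smul_one_posSemidef hS.1 heig

lemma posSemidef_specNorm_smul_sub {Sig : Matrix (Fin d) (Fin d) ℝ} (hS : Sig.PosSemidef) :
    (specNorm Sig • 1 - Sig).PosSemidef := by
  have hT : (Sigᵀ * Sig).IsHermitian := by
    simpa [Matrix.conjTranspose_eq_transpose_of_trivial] using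
      Matrix.isHermitian_conjTranspose_mul_self Sig
  set m : ℝ := ⨆ i, hT.eigenvalues i with hmdef
  have hν : specNorm Sig = Real.sqrt m := rfl
  have hm : ∀ i, hT.eigenvalues i ≤ m := fun i => le_ciSup (Set.finite_range _).bddAbove i
  have hTm := smul_one_sub_posSemidef hT hm
  have heig : ∀ i, hS.1.eigenvalues i ≤ specNorm Sig := by
    intro i
    set v : Fin d → ℝ := ⇑(hS.1.eigenvectorBasis i) with hvdef
    have hv0 : v ≠ 0 := by
      intro hcon
      exact (hS.1.eigenvectorBasis.orthonormal.ne_zero i) (by rw [hvdef] at hcon; simpa using hcon)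
    have hvv : 0 < v ⬝ᵥ v := dotProduct_self_pos hv0
    have heigv : Sig *ᵥ v = hS.1.eigenvalues i • v := hS.1.mulVec_eigenvectorBasis i
    set lam := hS.1.eigenvalues i with hlamdef
    have hq := hTm.dotProduct_mulVec_nonneg v
    have hsv : star v = v := by simp
    rw [hsv, Matrix.sub_mulVec, dotProduct_sub, quad_transpose_mul_self, heigv] at hq
    rw [Matrix.smul_mulVec, Matrix.one_mulVec, dotProduct_smul, smul_dotProduct] at hq
    have hq2 : 0 ≤ m * (v ⬝ᵥ v) - lam * (lam * (v ⬝ᵥ v)) := by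
      simpa [smul_eq_mul] using hq
    have hmle : lam ^ 2 ≤ m := by nlinarith
    have hlam0 : 0 ≤ lam := hS.eigenvalues_nonneg i
    calc lam = Real.sqrt (lam ^ 2) := by rw [Real.sqrt_sq hlam0]
      _ ≤ Real.sqrt m := Real.sqrt_le_sqrt hmle
      _ = specNorm Sig := hν.symm
  exact smul_one_sub_posSemidef hS.1 heig

/-- trace of a PSD matrix is nonnegative -/
lemma trace_nonneg_of_posSemidef {S : Matrix (Fin d) (Fin d) ℝ} (hS : S.PosSemidef) :
    0 ≤ S.trace := by
  rw [Matrix.trace]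
  refine Finset.sum_nonneg fun i _ => ?_
  have h := hS.dotProduct_mulVec_nonneg (Pi.single i 1)
  have hs : star (Pi.single i 1 : Fin d → ℝ) = Pi.single i 1 := by simp
  rw [hs] at h
  have : (Pi.single i 1 : Fin d → ℝ) ⬝ᵥ S *ᵥ Pi.single i 1 = S i i := by
    rw [Matrix.mulVec_single]
    simp [Matrix.diag]
  rwa [this] at h

lemma trace_mul_nonneg {S T : Matrix (Fin d) (Fin d) ℝ} (hS : S.PosSemidef)
    (hT : T.PosSemidef) : 0 ≤ (S * T).trace := by
  obtain ⟨B, rfl⟩ := psd_eq_conjTranspose_mul_self hS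
  rw [(Matrix.trace_mul_cycle B T Bᴴ).symm]
  exact trace_nonneg_of_posSemidef (hT.mul_mul_conjTranspose_same B)

lemma trace_mul_mono {S T1 T2 : Matrix (Fin d) (Fin d) ℝ} (hS : S.PosSemidef)
    (h : (T2 - T1).PosSemidef) : (S * T1).trace ≤ (S * T2).trace := by
  have h1 : 0 ≤ (S * (T2 - T1)).trace := trace_mul_nonneg hS h
  rw [Matrix.mul_sub, Matrix.trace_sub] at h1
  linarith

end Eigen


section CostDiff

variable {k : ℕ} (A : Matrix (Fin d) (Fin d) ℝ) (B : Matrix (Fin d) (Fin k) ℝ)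
  (Q : Matrix (Fin d) (Fin d) ℝ) (R : Matrix (Fin k) (Fin k) ℝ)
  (Sig0 : Matrix (Fin d) (Fin d) ℝ)

lemma Pmat_eq (K : Matrix (Fin k) (Fin d) ℝ) :
    Pmat A B Q R K = lyap (A - B * K) (Q + Kᵀ * R * K) := rfl

lemma SigmaMat_eq (K : Matrix (Fin k) (Fin d) ℝ) :
    SigmaMat A B Sig0 K = lyap (A - B * K)ᵀ Sig0 := by
  unfold SigmaMat lyap
  exact tsum_congr fun t => by rw [Matrix.transpose_transpose]

lemma trace_mul_lyap {M : Matrix (Fin d) (Fin d) ℝ} (h : specRad M < 1)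
    (X S : Matrix (Fin d) (Fin d) ℝ) :
    (X * lyap M S).trace = ((lyap Mᵀ X) * S).trace := by
  have hMT : specRad Mᵀ < 1 := by rwa [specRad_transpose]
  have hs := summable_lyap h S
  have hs2 := summable_lyap hMT X
  calc (X * lyap M S).trace = ∑' t : ℕ, (X * (Mᵀ ^ t * S * M ^ t)).trace := by
        rw [lyap, ← hs.tsum_mul_left X, trace_tsum (hs.mul_left X)]
    _ = ∑' t : ℕ, ((Mᵀᵀ ^ t * X * Mᵀ ^ t) * S).trace := by
        refine tsum_congr fun t => ?_
        rw [Matrix.transpose_transpose]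
        calc (X * (Mᵀ ^ t * S * M ^ t)).trace
            = ((X * Mᵀ ^ t * S) * M ^ t).trace := by simp only [Matrix.mul_assoc]
          _ = (M ^ t * (X * Mᵀ ^ t * S)).trace := Matrix.trace_mul_comm _ _
          _ = ((M ^ t * X * Mᵀ ^ t) * S).trace := by simp only [Matrix.mul_assoc]
    _ = ((lyap Mᵀ X) * S).trace := by
        rw [lyap, ← hs2.tsum_mul_right S, trace_tsum (hs2.mul_right S)]

/-- The fundamental algebraic identity used in the cost-difference lemma. -/
lemma lambda_identity {P1 : Matrix (Fin d) (Fin d) ℝ} (hP1sym : P1ᵀ = P1) (hRsym : Rᵀ = R)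
    (K1 K2 : Matrix (Fin k) (Fin d) ℝ)
    (hric : P1 = (Q + K1ᵀ * R * K1) + (A - B * K1)ᵀ * P1 * (A - B * K1)) :
    (Q + K2ᵀ * R * K2) + (A - B * K2)ᵀ * P1 * (A - B * K2) - P1
      = (K2 - K1)ᵀ * (R + Bᵀ * P1 * B) * (K2 - K1)
        + (K2 - K1)ᵀ * ((R + Bᵀ * P1 * B) * K1 - Bᵀ * P1 * A)
        + ((R + Bᵀ * P1 * B) * K1 - Bᵀ * P1 * A)ᵀ * (K2 - K1) := by
  have hfree : (Q + K2ᵀ * R * K2) + (A - B * K2)ᵀ * P1 * (A - B * K2)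
      - ((Q + K1ᵀ * R * K1) + (A - B * K1)ᵀ * P1 * (A - B * K1))
      = (K2 - K1)ᵀ * (R + Bᵀ * P1 * B) * (K2 - K1)
        + (K2 - K1)ᵀ * ((R + Bᵀ * P1 * B) * K1 - Bᵀ * P1 * A)
        + ((R + Bᵀ * P1 * B) * K1 - Bᵀ * P1 * A)ᵀ * (K2 - K1) := by
    simp only [Matrix.transpose_sub, Matrix.transpose_mul, Matrix.transpose_add,
      Matrix.transpose_transpose, hP1sym, hRsym]
    simp only [Matrix.sub_mul, Matrix.mul_sub, Matrix.add_mul, Matrix.mul_add,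
      Matrix.mul_assoc, sub_mul, mul_sub, add_mul, mul_add, mul_assoc]
    abel
  nth_rewrite 2 [hric]
  exact hfree

/-- Cost difference lemma. -/
lemma cost_diff (hQ : Q.PosDef) (hR : R.PosDef)
    (K1 K2 : Matrix (Fin k) (Fin d) ℝ)
    (h1 : specRad (A - B * K1) < 1) (h2 : specRad (A - B * K2) < 1) :
    Cost A B Q R Sig0 K2 - Cost A B Q R Sig0 K1 =
      ((SigmaMat A B Sig0 K2) *
        ((K2 - K1)ᵀ * (R + Bᵀ * Pmat A B Q R K1 * B) * (K2 - K1)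
          + (K2 - K1)ᵀ * Emat A B Q R K1 + (Emat A B Q R K1)ᵀ * (K2 - K1))).trace := by
  set P1 := Pmat A B Q R K1 with hP1def
  set P2 := Pmat A B Q R K2 with hP2def
  set Lam := (K2 - K1)ᵀ * (R + Bᵀ * P1 * B) * (K2 - K1)
    + (K2 - K1)ᵀ * Emat A B Q R K1 + (Emat A B Q R K1)ᵀ * (K2 - K1) with hLamdef
  have hS1psd : (Q + K1ᵀ * R * K1).PosSemidef := by
    refine hQ.posSemidef.add ?_
    have := hR.posSemidef.conjTranspose_mul_mul_same K1
    rwa [Matrix.conjTranspose_eq_transpose_of_trivial] at this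
  have hP1sym : P1ᵀ = P1 := by
    have h := (lyap_posSemidef h1 hS1psd).1.eq
    rwa [Matrix.conjTranspose_eq_transpose_of_trivial] at h
  have hric1 : P1 = (Q + K1ᵀ * R * K1) + (A - B * K1)ᵀ * P1 * (A - B * K1) := by
    rw [hP1def, Pmat_eq]
    exact lyap_fixed h1 _
  have hric2 : P2 = (Q + K2ᵀ * R * K2) + (A - B * K2)ᵀ * P2 * (A - B * K2) := by
    rw [hP2def, Pmat_eq]
    exact lyap_fixed h2 _
  have hLam2 : Lam = (Q + K2ᵀ * R * K2) + (A - B * K2)ᵀ * P1 * (A - B * K2) - P1 := by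
    rw [hLamdef, Emat, ← hP1def]
    exact (lambda_identity A B Q R hP1sym hR.isHermitian.eq K1 K2 hric1).symm
  have hdiff : P2 - P1 = Lam + (A - B * K2)ᵀ * (P2 - P1) * (A - B * K2) := by
    rw [hLam2]
    conv_lhs => rw [hric2]
    rw [mul_sub ((A - B * K2)ᵀ) P2 P1, sub_mul]
    abel
  have hkey : P2 - P1 = lyap (A - B * K2) Lam := lyap_unique h2 hdiff
  have : Cost A B Q R Sig0 K2 - Cost A B Q R Sig0 K1 = (Sig0 * (P2 - P1)).trace := by
    rw [Cost, Cost, Matrix.mul_sub, Matrix.trace_sub]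
  rw [this, hkey, trace_mul_lyap h2, ← SigmaMat_eq]

end CostDiff


section Main

lemma posSemidef_smul' {T : Matrix (Fin d) (Fin d) ℝ} (hT : T.PosSemidef) {c : ℝ}
    (hc : 0 ≤ c) : (c • T).PosSemidef := by
  refine Matrix.PosSemidef.of_dotProduct_mulVec_nonneg ?_ ?_
  · show (c • T)ᴴ = c • T
    rw [Matrix.conjTranspose_smul, hT.1.eq]
    congr 1
  · intro x
    have h := hT.dotProduct_mulVec_nonneg x
    rw [Matrix.smul_mulVec, dotProduct_smul]
    exact smul_nonneg hc h

lemma nonneg_of_smul_one_posSemidef (hd : 0 < d) {c : ℝ}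
    (h : ((c • (1 : Matrix (Fin d) (Fin d) ℝ))).PosSemidef) : 0 ≤ c := by
  set i0 : Fin d := ⟨0, hd⟩
  have h2 := h.dotProduct_mulVec_nonneg (Pi.single i0 1)
  have hs : star (Pi.single i0 1 : Fin d → ℝ) = Pi.single i0 1 := by simp
  rw [hs, Matrix.smul_mulVec, Matrix.one_mulVec, dotProduct_smul] at h2
  have h3 : (Pi.single i0 1 : Fin d → ℝ) ⬝ᵥ Pi.single i0 1 = 1 := by
    simp [dotProduct, Pi.single_apply]
  rw [h3] at h2
  simpa using h2

end Main

end LQR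

open LQR

set_option maxHeartbeats 1000000 in
/-- Gauss–Newton one-step progress. -/
theorem gauss_newton_one_step {d k : ℕ}
    (A : Matrix (Fin d) (Fin d) ℝ) (B : Matrix (Fin d) (Fin k) ℝ)
    (Q : Matrix (Fin d) (Fin d) ℝ) (R : Matrix (Fin k) (Fin k) ℝ)
    (Sig0 : Matrix (Fin d) (Fin d) ℝ)
    (hQ : Q.PosDef) (hR : R.PosDef) (hSig0 : Sig0.PosSemidef)
    (hmu : 0 < sigmaMin Sig0)
    (K Kstar : Matrix (Fin k) (Fin d) ℝ)
    (hK : specRad (A - B * K) < 1) (hKstar : specRad (A - B * Kstar) < 1)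
    (hopt : ∀ K'' : Matrix (Fin k) (Fin d) ℝ, specRad (A - B * K'') < 1 →
      Cost A B Q R Sig0 Kstar ≤ Cost A B Q R Sig0 K'')
    (η : ℝ) (hη0 : 0 < η) (hη1 : η ≤ 1)
    (K' : Matrix (Fin k) (Fin d) ℝ)
    (hK'def : K' = K - η • ((R + Bᵀ * Pmat A B Q R K * B)⁻¹ * Emat A B Q R K)) :
    specRad (A - B * K') < 1 ∧
    Cost A B Q R Sig0 K' - Cost A B Q R Sig0 Kstar ≤
      (1 - η * sigmaMin Sig0 / specNorm (SigmaMat A B Sig0 Kstar)) *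
        (Cost A B Q R Sig0 K - Cost A B Q R Sig0 Kstar) := by
  -- d is positive
  have hd : 0 < d := by
    by_contra hd0
    push_neg at hd0
    have hd1 : d = 0 := Nat.le_zero.mp hd0
    subst hd1
    have : sigmaMin Sig0 = 0 := by
      unfold sigmaMin
      rw [Real.iInf_of_isEmpty (ι := Fin 0), Real.sqrt_zero]
    rw [this] at hmu
    exact lt_irrefl 0 hmu
  -- basic objects
  set P := Pmat A B Q R K with hPdef
  set W := R + Bᵀ * Pmat A B Q R K * B with hWdef
  set E := Emat A B Q R K with hEdef
  set M' := A - B * K' with hM'def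
  have hSKpsd : (Q + Kᵀ * R * K).PosSemidef := by
    refine hQ.posSemidef.add ?_
    have h := hR.posSemidef.conjTranspose_mul_mul_same K
    rwa [Matrix.conjTranspose_eq_transpose_of_trivial] at h
  have hPpsd : P.PosSemidef := by
    rw [hPdef, Pmat_eq]
    exact lyap_posSemidef hK hSKpsd
  have hPsym : Pᵀ = P := by
    have h := hPpsd.1.eq
    rwa [Matrix.conjTranspose_eq_transpose_of_trivial] at h
  have hric : P = (Q + Kᵀ * R * K) + (A - B * K)ᵀ * P * (A - B * K) := by
    rw [hPdef, Pmat_eq]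
    exact lyap_fixed hK _
  have hPposdef : P.PosDef := by
    rw [hric]
    have hSKpd : (Q + Kᵀ * R * K).PosDef := by
      refine hQ.add_posSemidef ?_
      have h := hR.posSemidef.conjTranspose_mul_mul_same K
      rwa [Matrix.conjTranspose_eq_transpose_of_trivial] at h
    refine hSKpd.add_posSemidef ?_
    have h := hPpsd.conjTranspose_mul_mul_same (A - B * K)
    rwa [Matrix.conjTranspose_eq_transpose_of_trivial] at h
  have hWposdef : W.PosDef := by
    rw [hWdef]
    refine hR.add_posSemidef ?_
    have h := hPpsd.conjTranspose_mul_mul_same B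
    rwa [Matrix.conjTranspose_eq_transpose_of_trivial] at h
  have hWsym : Wᵀ = W := by
    have h := hWposdef.posSemidef.1.eq
    rwa [Matrix.conjTranspose_eq_transpose_of_trivial] at h
  have hWdet : IsUnit W.det := (Matrix.isUnit_iff_isUnit_det W).mp hWposdef.isUnit
  have hWW : W * W⁻¹ = 1 := Matrix.mul_nonsing_inv W hWdet
  have hW1 : W⁻¹ * W = 1 := Matrix.nonsing_inv_mul W hWdet
  have hWinv_symm : W⁻¹ᵀ = W⁻¹ := by
    rw [Matrix.transpose_nonsing_inv, hWsym]
  have hWinvpsd : (W⁻¹).PosSemidef := by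
    have h := hWposdef.posSemidef.conjTranspose_mul_mul_same W⁻¹
    rwa [Matrix.conjTranspose_eq_transpose_of_trivial, hWinv_symm, hW1,
      Matrix.one_mul] at h
  set T0 := Eᵀ * (W⁻¹ * E) with hT0def
  have hT0psd : T0.PosSemidef := by
    have h := hWinvpsd.conjTranspose_mul_mul_same E
    rwa [Matrix.conjTranspose_eq_transpose_of_trivial, Matrix.mul_assoc] at h
  have hT0tr : 0 ≤ T0.trace := trace_nonneg_of_posSemidef hT0psd
  -- the step
  have hΔ : K' - K = (-η) • (W⁻¹ * E) := by
    rw [hK'def, sub_sub_cancel_left, ← neg_smul]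
  have hWE : W * (W⁻¹ * E) = E := by
    rw [← Matrix.mul_assoc, hWW, Matrix.one_mul]
  -- Λ' computation
  have hLam' : (K' - K)ᵀ * W * (K' - K) + (K' - K)ᵀ * E + Eᵀ * (K' - K)
      = (η ^ 2 - 2 * η) • T0 := by
    rw [hΔ]
    rw [Matrix.transpose_smul, Matrix.transpose_mul, hWinv_symm]
    simp only [Matrix.smul_mul, Matrix.mul_smul, smul_smul, Matrix.mul_assoc, hWE]
    rw [← hT0def]
    module
  -- Riccati/λ identity for K'
  have hident := lambda_identity A B Q R hPsym hR.isHermitian.eq K K' hric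
  rw [← hWdef] at hident
  have hident' : (Q + K'ᵀ * R * K') + M'ᵀ * P * M' - P = (η ^ 2 - 2 * η) • T0 := by
    rw [hM'def, hident]
    rw [show W * K - Bᵀ * P * A = E from rfl]
    exact hLam'
  -- stability of K'
  have hcoef : 0 ≤ 2 * η - η ^ 2 := by nlinarith
  have hstabkey : (P - M'ᵀ * P * M' - Q).PosSemidef := by
    have h3 : P - M'ᵀ * P * M' - Q = K'ᵀ * R * K' + (2 * η - η ^ 2) • T0 := by
      have h5 : (2 * η - η ^ 2) • T0 = -((η ^ 2 - 2 * η) • T0) := by module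
      rw [h5, ← hident']
      abel
    rw [h3]
    refine Matrix.PosSemidef.add ?_ (posSemidef_smul' hT0psd hcoef)
    have h := hR.posSemidef.conjTranspose_mul_mul_same K'
    rwa [Matrix.conjTranspose_eq_transpose_of_trivial] at h
  have hstab : specRad M' < 1 := specRad_lt_one_of_lyapunov hPposdef hQ hstabkey
  refine ⟨hstab, ?_⟩
  -- Σ matrices
  have hstabT : specRad M'ᵀ < 1 := by rwa [specRad_transpose]
  have hKstarT : specRad (A - B * Kstar)ᵀ < 1 := by rwa [specRad_transpose]
  set Sig' := SigmaMat A B Sig0 K' with hSig'def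
  set SigS := SigmaMat A B Sig0 Kstar with hSigSdef
  have hSig'psd : Sig'.PosSemidef := by
    rw [hSig'def, SigmaMat_eq, ← hM'def]
    exact lyap_posSemidef hstabT hSig0
  have hSigSpsd : SigS.PosSemidef := by
    rw [hSigSdef, SigmaMat_eq]
    exact lyap_posSemidef hKstarT hSig0
  set μ := sigmaMin Sig0 with hμdef
  set ν := specNorm SigS with hνdef
  -- Σ' ⪰ Σ₀ and Σ* ⪰ Σ₀
  have hgramge : ∀ (L : Matrix (Fin k) (Fin d) ℝ), specRad (A - B * L)ᵀ < 1 →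
      (SigmaMat A B Sig0 L - Sig0).PosSemidef := by
    intro L hL
    rw [SigmaMat_eq]
    have hfix := lyap_fixed hL Sig0
    have h8 : lyap (A - B * L)ᵀ Sig0 - Sig0
        = (A - B * L)ᵀᵀ * lyap (A - B * L)ᵀ Sig0 * (A - B * L)ᵀ := by
      conv_lhs => rw [hfix]
      abel
    rw [h8]
    have h := (lyap_posSemidef hL hSig0).conjTranspose_mul_mul_same (A - B * L)ᵀ
    rwa [Matrix.conjTranspose_eq_transpose_of_trivial] at h
  have hSig0mu : (Sig0 - μ • 1).PosSemidef := posSemidef_sub_sigmaMin_smul hSig0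
  have hSig'mu : (Sig' - μ • (1 : Matrix (Fin d) (Fin d) ℝ)).PosSemidef := by
    have h9 : Sig' - μ • (1 : Matrix (Fin d) (Fin d) ℝ)
        = (Sig' - Sig0) + (Sig0 - μ • 1) := by abel
    rw [h9]
    exact (hgramge K' hstabT).add hSig0mu
  have hSigSnu : (ν • (1 : Matrix (Fin d) (Fin d) ℝ) - SigS).PosSemidef :=
    posSemidef_specNorm_smul_sub hSigSpsd
  -- ν ≥ μ > 0
  have hνμ : μ ≤ ν := by
    have hSigSmu : (SigS - μ • (1 : Matrix (Fin d) (Fin d) ℝ)).PosSemidef := by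
      have h9 : SigS - μ • (1 : Matrix (Fin d) (Fin d) ℝ)
          = (SigS - Sig0) + (Sig0 - μ • 1) := by abel
      rw [h9]
      exact (hgramge Kstar hKstarT).add hSig0mu
    have h10 : ((ν - μ) • (1 : Matrix (Fin d) (Fin d) ℝ)).PosSemidef := by
      have h11 : (ν - μ) • (1 : Matrix (Fin d) (Fin d) ℝ)
          = (ν • (1 : Matrix (Fin d) (Fin d) ℝ) - SigS) + (SigS - μ • 1) := by
        rw [sub_smul]; abel
      rw [h11]
      exact hSigSnu.add hSigSmu
    have := nonneg_of_smul_one_posSemidef hd h10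
    linarith
  have hν0 : 0 < ν := lt_of_lt_of_le hmu hνμ
  -- trace bounds
  have hgeμ : μ * T0.trace ≤ (Sig' * T0).trace := by
    have h := trace_mul_mono hT0psd hSig'mu
    rw [Matrix.mul_smul, Matrix.mul_one, Matrix.trace_smul, smul_eq_mul] at h
    rwa [Matrix.trace_mul_comm Sig' T0]
  have hleν : (SigS * T0).trace ≤ ν * T0.trace := by
    have h12 : (SigS - (ν • (1 : Matrix (Fin d) (Fin d) ℝ) - (ν • 1 - SigS))) = 0 := by abel
    have h := trace_mul_mono hT0psd (show ((ν • (1 : Matrix (Fin d) (Fin d) ℝ)) - SigS).PosSemidef from hSigSnu)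
    rw [Matrix.mul_smul, Matrix.mul_one, Matrix.trace_smul, smul_eq_mul] at h
    rwa [Matrix.trace_mul_comm SigS T0]
  -- cost difference for K'
  have hcd1 : Cost A B Q R Sig0 K' - Cost A B Q R Sig0 K
      = (η ^ 2 - 2 * η) * (Sig' * T0).trace := by
    have h := cost_diff A B Q R Sig0 hQ hR K K' hK hstab
    rw [← hWdef, ← hEdef, ← hSig'def] at h
    rw [h, hLam', Matrix.mul_smul, Matrix.trace_smul, smul_eq_mul]
  -- cost difference for K*
  have hcd2 : Cost A B Q R Sig0 K - Cost A B Q R Sig0 Kstar ≤ ν * T0.trace := by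
    have h := cost_diff A B Q R Sig0 hQ hR K Kstar hK hKstar
    rw [← hWdef, ← hEdef, ← hSigSdef] at h
    set Δs := Kstar - K with hΔsdef
    have hpsdsum : (Δsᵀ * W * Δs + Δsᵀ * E + Eᵀ * Δs + T0).PosSemidef := by
      have hid : Δsᵀ * W * Δs + Δsᵀ * E + Eᵀ * Δs + T0
          = (Δs + W⁻¹ * E)ᵀ * W * (Δs + W⁻¹ * E) := by
        rw [Matrix.transpose_add, Matrix.transpose_mul, hWinv_symm]
        simp only [Matrix.add_mul, Matrix.mul_add, Matrix.mul_assoc, hWE]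
        have hWΔ : W⁻¹ * (W * Δs) = Δs := by
          rw [← Matrix.mul_assoc, hW1, Matrix.one_mul]
        rw [hWΔ, hT0def]
        abel
      rw [hid]
      have hps := hWposdef.posSemidef.conjTranspose_mul_mul_same (Δs + W⁻¹ * E)
      rwa [Matrix.conjTranspose_eq_transpose_of_trivial] at hps
    have hmono := trace_mul_mono hSigSpsd
      (show ((Δsᵀ * W * Δs + Δsᵀ * E + Eᵀ * Δs) - (-T0)).PosSemidef by
        rw [sub_neg_eq_add]; exact hpsdsum)
    rw [Matrix.mul_neg, Matrix.trace_neg] at hmono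
    have h13 : -(SigS * T0).trace ≤ Cost A B Q R Sig0 Kstar - Cost A B Q R Sig0 K := by
      rw [h]; exact hmono
    linarith
  -- final arithmetic
  have hX : μ * T0.trace ≤ (Sig' * T0).trace := hgeμ
  have hXnn : 0 ≤ (Sig' * T0).trace := le_trans (by positivity) hX
  have h1 : Cost A B Q R Sig0 K' - Cost A B Q R Sig0 K ≤ -(η * (μ * T0.trace)) := by
    rw [hcd1]
    nlinarith [mul_nonneg (mul_nonneg hη0.le (sub_nonneg.mpr hη1)) hXnn,
      mul_le_mul_of_nonneg_left hX hη0.le]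
  have hkey : (η * μ / ν) * (Cost A B Q R Sig0 K - Cost A B Q R Sig0 Kstar)
      ≤ η * (μ * T0.trace) := by
    have hc : 0 ≤ η * μ / ν := by positivity
    have := mul_le_mul_of_nonneg_left hcd2 hc
    calc (η * μ / ν) * (Cost A B Q R Sig0 K - Cost A B Q R Sig0 Kstar)
        ≤ (η * μ / ν) * (ν * T0.trace) := this
      _ = η * (μ * T0.trace) := by field_simp
  have hring : (1 - η * μ / ν) * (Cost A B Q R Sig0 K - Cost A B Q R Sig0 Kstar)
      = (Cost A B Q R Sig0 K - Cost A B Q R Sig0 Kstar)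
        - (η * μ / ν) * (Cost A B Q R Sig0 K - Cost A B Q R Sig0 Kstar) := by ring
  rw [hνdef] at hring ⊢
  linarith [hring]
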